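/- There is an absolute constant C > 0 such that for every ε ∈ (0,1] and all t > 0 and 0 < r < 1, the kernel satisfies |G_ε(r,t)| ≤ C · min( t^{-1/2}(1+t)^{-1}, r^{-1} ). -/

import Mathlib

/-! The trivial bound `‖∫_t^∞ e^{iΦ} s^{-3/2} ds‖ ≤ ∫_t^∞ s^{-3/2} ds = 2 t^{-1/2}` already gives
both estimates when `r² ≲ t ≤ 2`. Otherwise the phase `Φ(s) = (s - t) z + r²/(4s)` is
non-stationary on an interval `[t, b]`, uniformly in `ε`: `|Φ'(s)| ≥ |1/4 - r²/(4s²)|`, which is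
`≥ 1/8` for `s ≥ 2` and `≥ r²/(8s²)` for `s ≤ r²/2`. One integration by parts on `[t, b]`
(using `|e^{iΦ}| ≤ 1`, as `Im z = ε ≥ 0`) and the trivial bound on `[b, ∞)` give `O(t^{-3/2})`
for `t ≥ 2` (with `b = t³`) and `O(1/r)` for `t < r²/2` (with `b = r²/2`). -/

open MeasureTheory

/-- The Green's function kernel `G_ε(r,t)` of `(−Δ − z)^{-1} e^{itΔ}` on `ℝ³`,
with `z = 1/4 + iε`. -/
noncomputable def Gker (ε r t : ℝ) : ℂ :=
  (Complex.exp (-(Real.pi / 4 : ℝ) * Complex.I) / ((8 * Real.pi ^ ((3 : ℝ) / 2) : ℝ))) *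
    ∫ s in Set.Ioi t,
      Complex.exp (Complex.I * (((s : ℂ) - (t : ℂ)) * (1 / 4 + (ε : ℂ) * Complex.I)
          + (r : ℂ) ^ 2 / (4 * (s : ℂ)))) * ((s ^ (-(3 : ℝ) / 2) : ℝ) : ℂ)

open Set

theorem norm_div_sq_sub_le {𝕜 : Type*} [NormedField 𝕜] (a a' p p' : 𝕜) {m : ℝ} (hm : 0 < m)
    (hp : m ≤ ‖p‖) :
    ‖(a' * p - a * p') / p ^ 2‖ ≤ ‖a'‖ / m + ‖a‖ * ‖p'‖ / m ^ 2 := by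
  have hp0 : 0 < ‖p‖ := hm.trans_le hp
  calc ‖(a' * p - a * p') / p ^ 2‖ ≤ (‖a'‖ * ‖p‖ + ‖a‖ * ‖p'‖) / ‖p‖ ^ 2 := by
        rw [norm_div, norm_pow, ← norm_mul, ← norm_mul]
        gcongr
        exact norm_sub_le _ _
    _ = ‖a'‖ / ‖p‖ + ‖a‖ * ‖p'‖ / ‖p‖ ^ 2 := by field_simp
    _ ≤ ‖a'‖ / m + ‖a‖ * ‖p'‖ / m ^ 2 := by gcongr

theorem intervalIntegral.norm_integral_mul_deriv_le {A : Type*} [NormedRing A]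
    [NormedAlgebra ℝ A] [CompleteSpace A] {a b : ℝ} {u u' v v' : ℝ → A} {φ : ℝ → ℝ}
    (hab : a ≤ b) (hu : ∀ x ∈ Icc a b, HasDerivAt u (u' x) x)
    (hv : ∀ x ∈ Icc a b, HasDerivAt v (v' x) x) (hu' : IntervalIntegrable u' volume a b)
    (hv' : IntervalIntegrable v' volume a b) (hv1 : ∀ x ∈ Icc a b, ‖v x‖ ≤ 1)
    (hφ : ∀ x ∈ Icc a b, ‖u' x‖ ≤ φ x) (hφi : IntervalIntegrable φ volume a b) :
    ‖∫ x in a..b, u x * v' x‖ ≤ ‖u a‖ + ‖u b‖ + ∫ x in a..b, φ x := by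
  have hbdry : ∀ x ∈ Icc a b, ‖u x * v x‖ ≤ ‖u x‖ := fun x hx =>
    (norm_mul_le _ _).trans (mul_le_of_le_one_right (norm_nonneg _) (hv1 x hx))
  have hrest : ‖∫ x in a..b, u' x * v x‖ ≤ ∫ x in a..b, φ x := by
    refine intervalIntegral.norm_integral_le_of_norm_le hab (ae_of_all _ fun x hx => ?_) hφi
    have hx' := Ioc_subset_Icc_self hx
    exact (norm_mul_le _ _).trans (mul_le_of_le_one_right (norm_nonneg _) (hv1 x hx') |>.trans
      (hφ x hx'))
  rw [intervalIntegral.integral_mul_deriv_eq_deriv_mul (by rwa [uIcc_of_le hab])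
    (by rwa [uIcc_of_le hab]) hu' hv']
  calc _ ≤ ‖u b * v b‖ + ‖u a * v a‖ + ‖∫ x in a..b, u' x * v x‖ :=
        (norm_sub_le _ _).trans (add_le_add_left (norm_sub_le _ _) _)
    _ ≤ _ := by
        linarith [hbdry a (left_mem_Icc.2 hab), hbdry b (right_mem_Icc.2 hab)]

theorem Real.sq_rpow_neg_natCast_div_two {σ : ℝ} (hσ : 0 ≤ σ) (n : ℕ) :
    (σ ^ 2) ^ (-(n : ℝ) / 2) = (σ ^ n)⁻¹ := by
  rw [← Real.rpow_natCast σ 2, ← Real.rpow_mul hσ, Nat.cast_ofNat,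
    show (2 : ℝ) * (-(n : ℝ) / 2) = -n by ring, Real.rpow_neg hσ, Real.rpow_natCast]

theorem Real.rpow_neg_one_half_le_inv {x σ : ℝ} (hσ : 0 < σ) (hx : σ ^ 2 ≤ x) :
    x ^ (-(1 : ℝ) / 2) ≤ σ⁻¹ := by
  calc x ^ (-(1 : ℝ) / 2) ≤ (σ ^ 2) ^ (-(1 : ℝ) / 2) :=
        Real.rpow_le_rpow_of_nonpos (by positivity) hx (by norm_num)
    _ = σ⁻¹ := by simpa using Real.sq_rpow_neg_natCast_div_two hσ.le 1

namespace Gker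

noncomputable def osc (ε t r s : ℝ) : ℂ :=
  Complex.exp (Complex.I * (((s : ℂ) - (t : ℂ)) * (1 / 4 + (ε : ℂ) * Complex.I)
      + (r : ℂ) ^ 2 / (4 * (s : ℂ))))

noncomputable def amp (s : ℝ) : ℂ := ((s ^ (-(3 : ℝ) / 2) : ℝ) : ℂ)

noncomputable def phaseDeriv (ε r s : ℝ) : ℂ :=
  Complex.I * ((1 / 4 + (ε : ℂ) * Complex.I) - (r : ℂ) ^ 2 / (4 * (s : ℂ) ^ 2))

theorem eq_mul_integral (ε r t : ℝ) :
    Gker ε r t = Complex.exp (-(Real.pi / 4 : ℝ) * Complex.I) /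
      ((8 * Real.pi ^ ((3 : ℝ) / 2) : ℝ)) * ∫ s in Ioi t, osc ε t r s * amp s := rfl

theorem norm_osc (ε t r s : ℝ) : ‖osc ε t r s‖ = Real.exp (-(ε * (s - t))) := by
  rw [osc, Complex.norm_exp]
  congr 1
  simp [Complex.mul_re, Complex.div_re, Complex.div_im, ← Complex.ofReal_pow,
    ← Complex.ofReal_ofNat, ← Complex.ofReal_mul]
  ring

theorem norm_osc_le_one {ε t s : ℝ} (r : ℝ) (hε : 0 ≤ ε) (hts : t ≤ s) : ‖osc ε t r s‖ ≤ 1 := by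
  rw [norm_osc, Real.exp_le_one_iff, neg_nonpos]
  exact mul_nonneg hε (sub_nonneg.2 hts)

theorem norm_amp {s : ℝ} (hs : 0 < s) : ‖amp s‖ = s ^ (-(3 : ℝ) / 2) := by
  rw [amp, Complex.norm_real, Real.norm_of_nonneg (Real.rpow_nonneg hs.le _)]

theorem abs_le_norm_phaseDeriv (ε r s : ℝ) :
    |1 / 4 - r ^ 2 / (4 * s ^ 2)| ≤ ‖phaseDeriv ε r s‖ := by
  have hre : (phaseDeriv ε r s / Complex.I).re = 1 / 4 - r ^ 2 / (4 * s ^ 2) := by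
    simp [phaseDeriv, Complex.div_re, ← Complex.ofReal_pow, ← Complex.ofReal_ofNat,
      ← Complex.ofReal_mul]
    field_simp
  rw [← hre, ← div_one ‖phaseDeriv ε r s‖, ← Complex.norm_I, ← norm_div]
  exact Complex.abs_re_le_norm _

theorem hasDerivAt_osc (ε t r : ℝ) {s : ℝ} (hs : s ≠ 0) :
    HasDerivAt (osc ε t r) (phaseDeriv ε r s * osc ε t r s) s := by
  have hs' : (s : ℂ) ≠ 0 := Complex.ofReal_ne_zero.2 hs
  have hphase : HasDerivAt (fun w : ℂ => Complex.I * ((w - t) * (1 / 4 + (ε : ℂ) * Complex.I)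
      + (r : ℂ) ^ 2 / (4 * w))) (phaseDeriv ε r s) (s : ℂ) := by
    have h := (((hasDerivAt_id (s : ℂ)).sub_const (t : ℂ)).mul_const
      (1 / 4 + (ε : ℂ) * Complex.I)).add
      ((hasDerivAt_const (s : ℂ) ((r : ℂ) ^ 2)).div ((hasDerivAt_id (s : ℂ)).const_mul 4)
        (mul_ne_zero (by norm_num) hs'))
    refine (h.const_mul Complex.I).congr_deriv ?_
    simp only [phaseDeriv, id]
    field_simp
    ring
  rw [mul_comm]
  exact hphase.cexp.comp_ofReal

theorem hasDerivAt_amp {s : ℝ} (hs : s ≠ 0) :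
    HasDerivAt amp ((-(3 : ℝ) / 2 * s ^ (-(3 : ℝ) / 2 - 1) : ℝ) : ℂ) s :=
  (Real.hasDerivAt_rpow_const (Or.inl hs)).ofReal_comp

theorem norm_deriv_amp {s : ℝ} (hs : 0 < s) :
    ‖((-(3 : ℝ) / 2 * s ^ (-(3 : ℝ) / 2 - 1) : ℝ) : ℂ)‖ = 3 / 2 * s ^ (-(3 : ℝ) / 2 - 1) := by
  rw [Complex.norm_real, Real.norm_eq_abs, abs_mul, abs_of_pos (Real.rpow_pos_of_pos hs _)]
  norm_num

theorem hasDerivAt_phaseDeriv (ε r : ℝ) {s : ℝ} (hs : s ≠ 0) :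
    HasDerivAt (phaseDeriv ε r) (Complex.I * ((r : ℂ) ^ 2 / (2 * (s : ℂ) ^ 3))) s := by
  have hs' : (s : ℂ) ≠ 0 := Complex.ofReal_ne_zero.2 hs
  have h : HasDerivAt (fun w : ℂ => Complex.I * ((1 / 4 + (ε : ℂ) * Complex.I)
      - (r : ℂ) ^ 2 / (4 * w ^ 2))) (Complex.I * ((r : ℂ) ^ 2 / (2 * (s : ℂ) ^ 3))) (s : ℂ) := by
    have h := (hasDerivAt_const (s : ℂ) (1 / 4 + (ε : ℂ) * Complex.I)).sub
      ((hasDerivAt_const (s : ℂ) ((r : ℂ) ^ 2)).div ((hasDerivAt_pow 2 (s : ℂ)).const_mul 4)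
        (mul_ne_zero (by norm_num) (pow_ne_zero 2 hs')))
    refine (h.const_mul Complex.I).congr_deriv ?_
    field_simp
    ring
  exact h.comp_ofReal

theorem norm_deriv_phaseDeriv (r : ℝ) {s : ℝ} (hs : 0 < s) :
    ‖Complex.I * ((r : ℂ) ^ 2 / (2 * (s : ℂ) ^ 3))‖ = r ^ 2 / (2 * s ^ 3) := by
  rw [norm_mul, Complex.norm_I, one_mul, ← Complex.ofReal_pow, ← Complex.ofReal_pow,
    ← Complex.ofReal_ofNat, ← Complex.ofReal_mul, ← Complex.ofReal_div, Complex.norm_real,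
    Real.norm_of_nonneg (by positivity)]

theorem norm_osc_mul_amp_le {ε t s : ℝ} (r : ℝ) (hε : 0 ≤ ε) (hts : t ≤ s) (hs : 0 < s) :
    ‖osc ε t r s * amp s‖ ≤ s ^ (-(3 : ℝ) / 2) := by
  rw [norm_mul, norm_amp hs]
  exact mul_le_of_le_one_left (Real.rpow_nonneg hs.le _) (norm_osc_le_one r hε hts)

theorem continuousOn_osc (ε t r : ℝ) {S : Set ℝ} (hS : ∀ s ∈ S, s ≠ 0) :
    ContinuousOn (osc ε t r) S := fun s hs =>
  (hasDerivAt_osc ε t r (hS s hs)).continuousAt.continuousWithinAt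

theorem continuousOn_amp {S : Set ℝ} (hS : ∀ s ∈ S, s ≠ 0) : ContinuousOn amp S := fun s hs =>
  (hasDerivAt_amp (hS s hs)).continuousAt.continuousWithinAt

theorem continuousOn_phaseDeriv (ε r : ℝ) {S : Set ℝ} (hS : ∀ s ∈ S, s ≠ 0) :
    ContinuousOn (phaseDeriv ε r) S := fun s hs =>
  (hasDerivAt_phaseDeriv ε r (hS s hs)).continuousAt.continuousWithinAt

theorem integrableOn_osc_mul_amp {ε t b : ℝ} (r : ℝ) (hε : 0 ≤ ε) (hb : 0 < b) (htb : t ≤ b) :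
    IntegrableOn (fun s => osc ε t r s * amp s) (Ioi b) := by
  have hS : ∀ s ∈ Ioi b, s ≠ 0 := fun s hs => (hb.trans hs).ne'
  refine Integrable.mono' (integrableOn_Ioi_rpow_of_lt (show -(3 : ℝ) / 2 < -1 by norm_num) hb)
    (((continuousOn_osc ε t r hS).mul (continuousOn_amp hS)).aestronglyMeasurable
      measurableSet_Ioi) ?_
  filter_upwards [ae_restrict_mem measurableSet_Ioi] with s hs
  exact norm_osc_mul_amp_le r hε (htb.trans hs.le) (hb.trans hs)

theorem norm_integral_Ioi_le {ε t b : ℝ} (r : ℝ) (hε : 0 ≤ ε) (hb : 0 < b) (htb : t ≤ b) :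
    ‖∫ s in Ioi b, osc ε t r s * amp s‖ ≤ 2 * b ^ (-(1 : ℝ) / 2) := by
  have hint : ∫ s in Ioi b, s ^ (-(3 : ℝ) / 2) = 2 * b ^ (-(1 : ℝ) / 2) := by
    rw [integral_Ioi_rpow_of_lt (by norm_num) hb]
    norm_num
    ring
  refine (norm_integral_le_of_norm_le
    (integrableOn_Ioi_rpow_of_lt (show -(3 : ℝ) / 2 < -1 by norm_num) hb) ?_).trans hint.le
  filter_upwards [ae_restrict_mem measurableSet_Ioi] with s hs
  exact norm_osc_mul_amp_le r hε (htb.trans hs.le) (hb.trans hs)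

/-- Integration by parts against `osc' = phaseDeriv * osc`: `φ` dominates the derivative of the
new amplitude `amp / phaseDeriv`. -/
theorem norm_intervalIntegral_osc_mul_amp_le {ε t b : ℝ} (r : ℝ) (m φ : ℝ → ℝ) (hε : 0 ≤ ε)
    (ht : 0 < t) (htb : t ≤ b) (hm : ∀ s ∈ Icc t b, 0 < m s ∧ m s ≤ ‖phaseDeriv ε r s‖)
    (hφ : ∀ s ∈ Icc t b, 3 / 2 * s ^ (-(3 : ℝ) / 2 - 1) / m s
      + s ^ (-(3 : ℝ) / 2) * (r ^ 2 / (2 * s ^ 3)) / m s ^ 2 ≤ φ s)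
    (hφi : IntervalIntegrable φ volume t b) :
    ‖∫ s in t..b, osc ε t r s * amp s‖
      ≤ t ^ (-(3 : ℝ) / 2) / m t + b ^ (-(3 : ℝ) / 2) / m b + ∫ s in t..b, φ s := by
  have hpos : ∀ s ∈ Icc t b, 0 < s := fun s hs => ht.trans_le hs.1
  have hS : ∀ s ∈ Icc t b, s ≠ 0 := fun s hs => (hpos s hs).ne'
  have hψ : ∀ s ∈ Icc t b, phaseDeriv ε r s ≠ 0 := fun s hs =>
    norm_pos_iff.1 ((hm s hs).1.trans_le (hm s hs).2)
  have hbdry : ∀ s ∈ Icc t b, ‖amp s / phaseDeriv ε r s‖ ≤ s ^ (-(3 : ℝ) / 2) / m s :=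
    fun s hs => by
      rw [norm_div, norm_amp (hpos s hs)]
      exact div_le_div_of_nonneg_left (Real.rpow_nonneg (hpos s hs).le _) (hm s hs).1 (hm s hs).2
  have hu : ∀ s ∈ Icc t b, HasDerivAt (fun s => amp s / phaseDeriv ε r s) _ s := fun s hs =>
    (hasDerivAt_amp (hS s hs)).div (hasDerivAt_phaseDeriv ε r (hS s hs)) (hψ s hs)
  have hu' : ContinuousOn (fun s : ℝ => ((((-(3 : ℝ) / 2 * s ^ (-(3 : ℝ) / 2 - 1) : ℝ) : ℂ)
      * phaseDeriv ε r s - amp s * (Complex.I * ((r : ℂ) ^ 2 / (2 * (s : ℂ) ^ 3))))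
      / phaseDeriv ε r s ^ 2)) (Icc t b) := by
    have hrpow : ContinuousOn (fun s : ℝ => s ^ (-(3 : ℝ) / 2 - 1)) (Icc t b) :=
      continuousOn_id.rpow_const fun s hs => Or.inl (hS s hs)
    have hcube : ContinuousOn (fun s : ℝ => (r : ℂ) ^ 2 / (2 * (s : ℂ) ^ 3)) (Icc t b) :=
      continuousOn_const.div (by fun_prop) fun s hs => by simp [hS s hs]
    exact (((Complex.continuous_ofReal.comp_continuousOn (continuousOn_const.mul hrpow)).mul
      (continuousOn_phaseDeriv ε r hS)).sub ((continuousOn_amp hS).mul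
      (continuousOn_const.mul hcube))).div ((continuousOn_phaseDeriv ε r hS).pow 2)
      fun s hs => pow_ne_zero 2 (hψ s hs)
  have hcongr : ∫ s in t..b, osc ε t r s * amp s
      = ∫ s in t..b, amp s / phaseDeriv ε r s * (phaseDeriv ε r s * osc ε t r s) := by
    refine intervalIntegral.integral_congr fun s hs => ?_
    rw [uIcc_of_le htb] at hs
    field_simp [hψ s hs]
  rw [hcongr]
  refine (intervalIntegral.norm_integral_mul_deriv_le htb hu
    (fun s hs => hasDerivAt_osc ε t r (hS s hs)) ?_ ?_
    (fun s hs => norm_osc_le_one r hε hs.1) (fun s hs => ?_) hφi).trans ?_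
  · exact (hu').intervalIntegrable_of_Icc htb
  · exact ((continuousOn_phaseDeriv ε r hS).mul
      (continuousOn_osc ε t r hS)).intervalIntegrable_of_Icc htb
  · refine (norm_div_sq_sub_le _ _ _ _ (hm s hs).1 (hm s hs).2).trans (le_of_eq_of_le ?_ (hφ s hs))
    rw [norm_deriv_amp (hpos s hs), norm_deriv_phaseDeriv r (hpos s hs), norm_amp (hpos s hs)]
  · gcongr
    · exact hbdry t (left_mem_Icc.2 htb)
    · exact hbdry b (right_mem_Icc.2 htb)

theorem norm_integral_le_of_phaseDeriv_ge {ε t b : ℝ} (r : ℝ) (m φ : ℝ → ℝ) (hε : 0 ≤ ε)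
    (ht : 0 < t) (htb : t ≤ b) (hm : ∀ s ∈ Icc t b, 0 < m s ∧ m s ≤ ‖phaseDeriv ε r s‖)
    (hφ : ∀ s ∈ Icc t b, 3 / 2 * s ^ (-(3 : ℝ) / 2 - 1) / m s
      + s ^ (-(3 : ℝ) / 2) * (r ^ 2 / (2 * s ^ 3)) / m s ^ 2 ≤ φ s)
    (hφi : IntervalIntegrable φ volume t b) :
    ‖∫ s in Ioi t, osc ε t r s * amp s‖ ≤ t ^ (-(3 : ℝ) / 2) / m t + b ^ (-(3 : ℝ) / 2) / m b
      + (∫ s in t..b, φ s) + 2 * b ^ (-(1 : ℝ) / 2) := by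
  have hsplit : ∫ s in Ioi t, osc ε t r s * amp s
      = (∫ s in t..b, osc ε t r s * amp s) + ∫ s in Ioi b, osc ε t r s * amp s := by
    rw [intervalIntegral.integral_of_le htb, ← setIntegral_union (Ioc_disjoint_Ioi le_rfl)
      measurableSet_Ioi ((integrableOn_osc_mul_amp r hε ht le_rfl).mono_set Ioc_subset_Ioi_self)
      (integrableOn_osc_mul_amp r hε (ht.trans_le htb) htb), Ioc_union_Ioi_eq_Ioi htb]
  rw [hsplit]
  exact (norm_add_le _ _).trans (add_le_add
    (norm_intervalIntegral_osc_mul_amp_le r m φ hε ht htb hm hφ hφi)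
    (norm_integral_Ioi_le r hε (ht.trans_le htb) htb))

theorem norm_integral_le_of_two_le {ε t r : ℝ} (hε : 0 ≤ ε) (hr : r ^ 2 ≤ 1) (ht : 2 ≤ t) :
    ‖∫ s in Ioi t, osc ε t r s * amp s‖ ≤ 48 * t ^ (-(3 : ℝ) / 2) := by
  have ht0 : 0 < t := by linarith
  have htb : t ≤ t ^ 3 := le_self_pow₀ (by linarith) (by norm_num)
  have hb0 : 0 < t ^ 3 := by positivity
  have hm : ∀ s ∈ Icc t (t ^ 3), 0 < (1 / 8 : ℝ) ∧ 1 / 8 ≤ ‖phaseDeriv ε r s‖ := by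
    intro s hs
    have hs2 : 2 ≤ s := ht.trans hs.1
    have hsmall : r ^ 2 / (4 * s ^ 2) ≤ 1 / 16 := by
      rw [div_le_iff₀ (by positivity)]
      nlinarith
    refine ⟨by norm_num, le_trans ?_ (abs_le_norm_phaseDeriv ε r s)⟩
    rw [abs_of_nonneg (by linarith)]
    linarith
  have hφ : ∀ s ∈ Icc t (t ^ 3), 3 / 2 * s ^ (-(3 : ℝ) / 2 - 1) / (1 / 8)
      + s ^ (-(3 : ℝ) / 2) * (r ^ 2 / (2 * s ^ 3)) / (1 / 8) ^ 2
      ≤ 44 * s ^ (-(3 : ℝ) / 2 - 1) := by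
    intro s hs
    have hs1 : 1 ≤ s := by linarith [hs.1]
    have hs0 : 0 < s := by linarith
    have hx := Real.rpow_pos_of_pos hs0 (-(3 : ℝ) / 2)
    rw [Real.rpow_sub_one hs0.ne']
    have hcube : s ≤ s ^ 3 := le_self_pow₀ hs1 (by norm_num)
    have key : s ^ (-(3 : ℝ) / 2) * r ^ 2 / s ^ 3 ≤ s ^ (-(3 : ℝ) / 2) / s := by
      rw [div_le_div_iff₀ (by positivity) hs0]
      nlinarith [mul_le_mul hr hcube (by positivity) zero_le_one]
    calc _ = 12 * (s ^ (-(3 : ℝ) / 2) / s) + 32 * (s ^ (-(3 : ℝ) / 2) * r ^ 2 / s ^ 3) := by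
          ring
      _ ≤ _ := by linarith
  have hφi : IntervalIntegrable (fun s : ℝ => 44 * s ^ (-(3 : ℝ) / 2 - 1)) volume t (t ^ 3) :=
    (intervalIntegral.intervalIntegrable_rpow (Or.inr (notMem_uIcc_of_lt ht0 hb0))).const_mul 44
  have hint : ∫ s in t..t ^ 3, 44 * s ^ (-(3 : ℝ) / 2 - 1)
      = 88 / 3 * (t ^ (-(3 : ℝ) / 2) - (t ^ 3) ^ (-(3 : ℝ) / 2)) := by
    rw [intervalIntegral.integral_const_mul,
      integral_rpow (Or.inr ⟨by norm_num, notMem_uIcc_of_lt ht0 hb0⟩)]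
    norm_num
    ring
  have htail : (t ^ 3) ^ (-(1 : ℝ) / 2) = t ^ (-(3 : ℝ) / 2) := by
    rw [← Real.rpow_natCast, ← Real.rpow_mul ht0.le]
    norm_num
  have hb : 0 < (t ^ 3) ^ (-(3 : ℝ) / 2) := Real.rpow_pos_of_pos hb0 _
  refine (norm_integral_le_of_phaseDeriv_ge r (fun _ => 1 / 8) _ hε ht0 htb hm hφ hφi).trans ?_
  rw [hint, htail]
  linarith [Real.rpow_le_rpow_of_nonpos ht0 htb (show -(3 : ℝ) / 2 ≤ 0 by norm_num)]

theorem norm_integral_le_of_lt_sq {ε t r : ℝ} (hε : 0 ≤ ε) (ht : 0 < t) (hr : 0 < r)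
    (hr1 : r ≤ 1) (htr : t < r ^ 2 / 2) :
    ‖∫ s in Ioi t, osc ε t r s * amp s‖ ≤ 108 * r⁻¹ := by
  set b := r ^ 2 / 2 with hb
  have hb0 : 0 < b := by positivity
  have hm : ∀ s ∈ Icc t b, 0 < r ^ 2 / (8 * s ^ 2) ∧ r ^ 2 / (8 * s ^ 2) ≤ ‖phaseDeriv ε r s‖ := by
    intro s hs
    have hs0 : 0 < s := ht.trans_le hs.1
    have hsb : s ≤ r ^ 2 / 2 := hs.2
    have hs1 : s ≤ 1 := by nlinarith
    have hs2 : 2 * s ^ 2 ≤ r ^ 2 := by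
      nlinarith [mul_le_mul_of_nonneg_left hsb hs0.le, mul_le_mul_of_nonneg_right hs1 (sq_nonneg r)]
    have hquarter : 1 / 4 ≤ r ^ 2 / (8 * s ^ 2) := by
      rw [le_div_iff₀ (by positivity)]
      linarith
    refine ⟨by positivity, le_trans ?_ (abs_le_norm_phaseDeriv ε r s)⟩
    rw [abs_sub_comm, show r ^ 2 / (4 * s ^ 2) = 2 * (r ^ 2 / (8 * s ^ 2)) by field_simp; ring]
    exact le_trans (by linarith) (le_abs_self _)
  have hφ : ∀ s ∈ Icc t b, 3 / 2 * s ^ (-(3 : ℝ) / 2 - 1) / (r ^ 2 / (8 * s ^ 2))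
      + s ^ (-(3 : ℝ) / 2) * (r ^ 2 / (2 * s ^ 3)) / (r ^ 2 / (8 * s ^ 2)) ^ 2
      ≤ 44 / r ^ 2 * s ^ (-(1 : ℝ) / 2) := by
    intro s hs
    have hs0 : 0 < s := ht.trans_le hs.1
    obtain ⟨σ, hσ, rfl⟩ : ∃ σ > 0, s = σ ^ 2 :=
      ⟨√s, Real.sqrt_pos.2 hs0, (Real.sq_sqrt hs0.le).symm⟩
    have h1 : (σ ^ 2) ^ (-(1 : ℝ) / 2) = σ⁻¹ := by
      simpa using Real.sq_rpow_neg_natCast_div_two hσ.le 1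
    have h3 : (σ ^ 2) ^ (-(3 : ℝ) / 2) = (σ ^ 3)⁻¹ := by
      exact_mod_cast Real.sq_rpow_neg_natCast_div_two hσ.le 3
    rw [Real.rpow_sub_one hs0.ne', h1, h3]
    apply le_of_eq
    field_simp
    ring
  have hbdry : ∀ s ∈ Icc t b, s ^ (-(3 : ℝ) / 2) / (r ^ 2 / (8 * s ^ 2)) ≤ 8 * r⁻¹ := by
    intro s hs
    have hs0 : 0 < s := ht.trans_le hs.1
    have hsb : s ≤ r ^ 2 / 2 := hs.2
    obtain ⟨σ, hσ, rfl⟩ : ∃ σ > 0, s = σ ^ 2 :=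
      ⟨√s, Real.sqrt_pos.2 hs0, (Real.sq_sqrt hs0.le).symm⟩
    have h3 : (σ ^ 2) ^ (-(3 : ℝ) / 2) = (σ ^ 3)⁻¹ := by
      exact_mod_cast Real.sq_rpow_neg_natCast_div_two hσ.le 3
    have hσr : σ ≤ r := by nlinarith
    rw [h3]
    calc (σ ^ 3)⁻¹ / (r ^ 2 / (8 * (σ ^ 2) ^ 2)) = 8 * σ / r ^ 2 := by
          field_simp
      _ ≤ 8 * r / r ^ 2 := by gcongr
      _ = 8 * r⁻¹ := by field_simp
  have hφi : IntervalIntegrable (fun s : ℝ => 44 / r ^ 2 * s ^ (-(1 : ℝ) / 2)) volume t b :=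
    (intervalIntegral.intervalIntegrable_rpow (Or.inr (notMem_uIcc_of_lt ht hb0))).const_mul _
  have hint : ∫ s in t..b, 44 / r ^ 2 * s ^ (-(1 : ℝ) / 2) ≤ 88 * r⁻¹ := by
    have hbr : b ^ (1 / (2 : ℝ)) ≤ r := by
      calc b ^ (1 / (2 : ℝ)) ≤ (r ^ 2) ^ (1 / (2 : ℝ)) :=
            Real.rpow_le_rpow hb0.le (by rw [hb]; nlinarith) (by norm_num)
        _ = r := by rw [← Real.sqrt_eq_rpow, Real.sqrt_sq hr.le]
    rw [intervalIntegral.integral_const_mul, integral_rpow (Or.inl (by norm_num)),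
      show -(1 : ℝ) / 2 + 1 = 1 / 2 by norm_num]
    calc 44 / r ^ 2 * ((b ^ (1 / (2 : ℝ)) - t ^ (1 / (2 : ℝ))) / (1 / 2))
        = 88 / r ^ 2 * b ^ (1 / (2 : ℝ)) - 88 / r ^ 2 * t ^ (1 / (2 : ℝ)) := by ring
      _ ≤ 88 / r ^ 2 * b ^ (1 / (2 : ℝ)) := sub_le_self _ (by positivity)
      _ ≤ 88 / r ^ 2 * r := by gcongr
      _ = 88 * r⁻¹ := by field_simp
  have htail : 2 * b ^ (-(1 : ℝ) / 2) ≤ 4 * r⁻¹ := by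
    have := Real.rpow_neg_one_half_le_inv (half_pos hr) (show (r / 2) ^ 2 ≤ b by rw [hb]; nlinarith)
    rw [inv_div] at this
    rw [show 4 * r⁻¹ = 2 * (2 / r) by ring]
    gcongr
  refine (norm_integral_le_of_phaseDeriv_ge r _ _ hε ht htr.le hm hφ hφi).trans ?_
  linarith [hbdry t (left_mem_Icc.2 htr.le), hbdry b (right_mem_Icc.2 htr.le)]

theorem norm_integral_le_time_decay {ε t r : ℝ} (hε : 0 ≤ ε) (hr : r ^ 2 ≤ 1) (ht : 0 < t) :
    ‖∫ s in Ioi t, osc ε t r s * amp s‖ ≤ 96 * (t ^ (-(1 : ℝ) / 2) * (1 + t)⁻¹) := by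
  have hy := Real.rpow_pos_of_pos ht (-(1 : ℝ) / 2)
  rw [← div_eq_mul_inv]
  rcases le_total t 2 with ht2 | ht2
  · refine (norm_integral_Ioi_le r hε ht le_rfl).trans ?_
    rw [mul_div_assoc', le_div_iff₀ (by positivity)]
    nlinarith
  · refine (norm_integral_le_of_two_le hε hr ht2).trans ?_
    rw [show -(3 : ℝ) / 2 = -(1 : ℝ) / 2 - 1 by norm_num, Real.rpow_sub_one ht.ne',
      mul_div_assoc', mul_div_assoc', div_le_div_iff₀ ht (by positivity)]
    nlinarith

theorem norm_integral_le_inv_radius {ε t r : ℝ} (hε : 0 ≤ ε) (ht : 0 < t) (hr : 0 < r)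
    (hr1 : r ≤ 1) : ‖∫ s in Ioi t, osc ε t r s * amp s‖ ≤ 108 * r⁻¹ := by
  rcases lt_or_ge t (r ^ 2 / 2) with htr | htr
  · exact norm_integral_le_of_lt_sq hε ht hr hr1 htr
  · have h := Real.rpow_neg_one_half_le_inv (half_pos hr) (show (r / 2) ^ 2 ≤ t by nlinarith)
    rw [inv_div] at h
    calc _ ≤ 2 * t ^ (-(1 : ℝ) / 2) := norm_integral_Ioi_le r hε ht le_rfl
      _ ≤ 2 * (2 / r) := by gcongr
      _ ≤ 108 * r⁻¹ := by rw [div_eq_mul_inv]; nlinarith [inv_pos.2 hr]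

theorem norm_le_norm_integral (ε r t : ℝ) :
    ‖Gker ε r t‖ ≤ ‖∫ s in Ioi t, osc ε t r s * amp s‖ := by
  rw [eq_mul_integral, norm_mul]
  refine mul_le_of_le_one_left (norm_nonneg _) ?_
  have hpi : 1 ≤ Real.pi ^ ((3 : ℝ) / 2) :=
    Real.one_le_rpow (by linarith [Real.pi_gt_three]) (by norm_num)
  rw [norm_div, Complex.norm_exp, Complex.norm_real, Real.norm_of_nonneg (by positivity),
    div_le_one (by positivity)]
  simpa using (by linarith : (1 : ℝ) ≤ 8 * Real.pi ^ ((3 : ℝ) / 2))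

end Gker

/-- There is an absolute constant `C > 0` such that for every `ε ∈ (0,1]`, all `t > 0`
and `0 < r < 1`, `|G_ε(r,t)| ≤ C · min (t^{-1/2}(1+t)^{-1}) (r^{-1})`. -/
theorem stmt2 :
    ∃ C : ℝ, 0 < C ∧
      ∀ ε ∈ Set.Ioc (0 : ℝ) 1, ∀ r t : ℝ, 0 < t → 0 < r → r < 1 →
        ‖Gker ε r t‖ ≤
          C * min (t ^ (-(1 : ℝ) / 2) * (1 + t)⁻¹) r⁻¹ := by
  refine ⟨108, by norm_num, ?_⟩
  rintro ε ⟨hε, -⟩ r t ht hr hr1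
  refine (Gker.norm_le_norm_integral ε r t).trans ?_
  rw [mul_min_of_nonneg _ _ (by norm_num)]
  refine le_min ?_ (Gker.norm_integral_le_inv_radius hε.le ht hr hr1.le)
  refine (Gker.norm_integral_le_time_decay hε.le (by nlinarith) ht).trans ?_
  gcongr
  norm_num
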